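/- arXiv:1802.06679 — 3 statements merged into one kernel-verified Lean document; each statement's English description precedes it below -/
import Mathlib

section
/- If f is a D-finite formal power series and g is a formal power series such that g' = h·g for some algebraic power series h over ℚ(x), then g is D-finite. In particular, if C is a power series whose derivative C' is algebraic, then exp(C) is D-finite. -/
open PowerSeries

/-- A formal power series over ℚ is D-finite if it satisfies a nontrivial linear
differential equation with polynomial coefficients. -/
def IsDFinitePS (f : PowerSeries ℚ) : Prop :=
  ∃ (k : ℕ) (c : Fin (k + 1) → Polynomial ℚ), (∃ i, c i ≠ 0) ∧
    ∑ i : Fin (k + 1),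
      ((c i : PowerSeries ℚ) * ((fun g => derivative ℚ g)^[(i : ℕ)] f)) = 0

/-- A formal power series over ℚ is algebraic if it is the root of a nonzero
polynomial with coefficients in ℚ[x]. -/
def IsAlgebraicPS (f : PowerSeries ℚ) : Prop :=
  ∃ P : Polynomial (Polynomial ℚ),
    P ≠ 0 ∧ Polynomial.eval₂ Polynomial.coeToPowerSeries.ringHom f P = 0

open Polynomial

attribute [local instance] RatFunc.liftAlgebra

noncomputable section

abbrev ρQ : Polynomial ℚ →+* PowerSeries ℚ := Polynomial.coeToPowerSeries.ringHom

/-- coefficient-wise (x-)derivative of an element of `ℚ[x][y]` -/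
def mapD (M : Polynomial (Polynomial ℚ)) : Polynomial (Polynomial ℚ) :=
  M.sum fun n a => Polynomial.monomial n (Polynomial.derivative a)

lemma mapD_monomial (n : ℕ) (a : Polynomial ℚ) :
    mapD (Polynomial.monomial n a) = Polynomial.monomial n (Polynomial.derivative a) := by
  unfold mapD
  rw [Polynomial.sum_monomial_index]
  simp

lemma mapD_add (p q : Polynomial (Polynomial ℚ)) : mapD (p + q) = mapD p + mapD q := by
  unfold mapD
  rw [Polynomial.sum_add_index] <;> simp [add_comm]

lemma aux_dcoe (p : Polynomial ℚ) : derivative ℚ (ρQ p) = ρQ (Polynomial.derivative p) := by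
  simpa using PowerSeries.derivative_coe (R := ℚ) p

lemma aux_dpow (b : PowerSeries ℚ) (n : ℕ) :
    derivative ℚ (b ^ n) * b = n • (b ^ n * derivative ℚ b) := by
  cases n with
  | zero => simp
  | succ n =>
    rw [Derivation.leibniz_pow]
    simp only [Nat.succ_sub_one, smul_eq_mul, nsmul_eq_mul, smul_mul_assoc, pow_succ]
    push_cast
    ring

lemma aux_chain (h : PowerSeries ℚ) (M : Polynomial (Polynomial ℚ)) :
    derivative ℚ (Polynomial.eval₂ ρQ h M)
      = Polynomial.eval₂ ρQ h (mapD M)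
        + Polynomial.eval₂ ρQ h (Polynomial.derivative M) * derivative ℚ h := by
  induction M using Polynomial.induction_on' with
  | add p q hp hq =>
      simp only [eval₂_add, mapD_add, Polynomial.derivative_add] at *
      rw [map_add, hp, hq]; ring
  | monomial n a =>
      rw [eval₂_monomial, Derivation.leibniz, Derivation.leibniz_pow,
        mapD_monomial, Polynomial.derivative_monomial, eval₂_monomial, eval₂_monomial,
        aux_dcoe]
      simp only [smul_eq_mul, nsmul_eq_mul, map_mul, map_natCast]
      ring

end

section Main

variable (h g : PowerSeries ℚ) (P : Polynomial (Polynomial ℚ))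

/-- the numerator polynomials for the successive derivatives -/
noncomputable def NN (P : Polynomial (Polynomial ℚ)) : ℕ → Polynomial (Polynomial ℚ)
  | 0 => 1
  | i + 1 =>
      mapD (NN P i) * (Polynomial.derivative P) ^ 2
        - Polynomial.derivative (NN P i) * mapD P * Polynomial.derivative P
        + NN P i * Polynomial.X * (Polynomial.derivative P) ^ 2
        - ((2 * i : ℕ) : Polynomial (Polynomial ℚ)) *
            (NN P i * (mapD (Polynomial.derivative P) * Polynomial.derivative P
              - Polynomial.derivative (Polynomial.derivative P) * mapD P))

lemma key_rel (hg : derivative ℚ g = h * g) (hP0 : Polynomial.eval₂ ρQ h P = 0) (i : ℕ) :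
    (fun g => derivative ℚ g)^[i] g * (Polynomial.eval₂ ρQ h (Polynomial.derivative P)) ^ (2 * i)
      = Polynomial.eval₂ ρQ h (NN P i) * g := by
  induction i with
  | zero => simp [NN]
  | succ i IH =>
      have hA' : (fun g => derivative ℚ g)^[i + 1] g
          = derivative ℚ ((fun g => derivative ℚ g)^[i] g) := by
        rw [Function.iterate_succ_apply']
      have hD := congrArg (derivative ℚ) IH
      rw [Derivation.leibniz, Derivation.leibniz, hg] at hD
      have hPrel : Polynomial.eval₂ ρQ h (mapD P)
          + Polynomial.eval₂ ρQ h (Polynomial.derivative P) * derivative ℚ h = 0 := by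
        have := aux_chain h P
        rw [hP0] at this
        exact this.symm.trans (by ring_nf; simp)
      have hq' := aux_chain h (Polynomial.derivative P)
      have hN' := aux_chain h (NN P i)
      have hpow := aux_dpow (Polynomial.eval₂ ρQ h (Polynomial.derivative P)) (2 * i)
      rw [hA']
      rw [show NN P (i+1) = mapD (NN P i) * (Polynomial.derivative P) ^ 2
        - Polynomial.derivative (NN P i) * mapD P * Polynomial.derivative P
        + NN P i * Polynomial.X * (Polynomial.derivative P) ^ 2
        - ((2 * i : ℕ) : Polynomial (Polynomial ℚ)) *
            (NN P i * (mapD (Polynomial.derivative P) * Polynomial.derivative P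
              - Polynomial.derivative (Polynomial.derivative P) * mapD P)) from rfl]
      simp only [eval₂_sub, eval₂_add, eval₂_mul, eval₂_pow, Polynomial.eval₂_X, eval₂_natCast, eval₂_ofNat,
        smul_eq_mul, nsmul_eq_mul, Nat.cast_mul, Nat.cast_ofNat] at *
      rw [show 2 * (i + 1) = 2 * i + 2 by ring, pow_add]
      linear_combination (norm := (push_cast; ring1))
        ((Polynomial.eval₂ ρQ h (Polynomial.derivative P))^2) * hD
        - ((fun g => derivative ℚ g)^[i] g * Polynomial.eval₂ ρQ h (Polynomial.derivative P)) * hpow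
        - (2 * (i : PowerSeries ℚ) * Polynomial.eval₂ ρQ h (Polynomial.derivative P)
            * derivative ℚ (Polynomial.eval₂ ρQ h (Polynomial.derivative P))) * IH
        - (2 * (i : PowerSeries ℚ) * Polynomial.eval₂ ρQ h (Polynomial.derivative P)
            * Polynomial.eval₂ ρQ h (NN P i) * g) * hq'
        + (g * (Polynomial.eval₂ ρQ h (Polynomial.derivative P))^2) * hN'
        + (g * Polynomial.eval₂ ρQ h (Polynomial.derivative (NN P i))
              * Polynomial.eval₂ ρQ h (Polynomial.derivative P)
            - 2 * (i : PowerSeries ℚ) * Polynomial.eval₂ ρQ h (NN P i) * g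
              * Polynomial.eval₂ ρQ h (Polynomial.derivative (Polynomial.derivative P))) * hPrel

end Main

open LaurentSeries in
lemma aux_coe_comm (p : Polynomial ℚ) :
    algebraMap (PowerSeries ℚ) (LaurentSeries ℚ) (ρQ p)
      = algebraMap (RatFunc ℚ) (LaurentSeries ℚ) (algebraMap (Polynomial ℚ) (RatFunc ℚ) p) := by
  have h1 : algebraMap (PowerSeries ℚ) (LaurentSeries ℚ) (ρQ p)
      = ((p : PowerSeries ℚ) : LaurentSeries ℚ) := by
    rw [Polynomial.coeToPowerSeries.ringHom_apply]
    rfl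
  rw [h1, RatFunc.coe_coe]
  rfl

lemma aux_eval_mem (h : PowerSeries ℚ) (M : Polynomial (Polynomial ℚ)) :
    algebraMap (PowerSeries ℚ) (LaurentSeries ℚ) (Polynomial.eval₂ ρQ h M)
      = Polynomial.aeval (algebraMap (PowerSeries ℚ) (LaurentSeries ℚ) h)
          (M.map (algebraMap (Polynomial ℚ) (RatFunc ℚ))) := by
  rw [Polynomial.hom_eval₂, Polynomial.aeval_def, Polynomial.eval₂_map]
  congr 1
  exact Polynomial.ringHom_ext (fun a => aux_coe_comm _) (aux_coe_comm _)

open IntermediateField in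
lemma aux_lin {F L : Type*} [Field F] [Field L] [Algebra F L] {x : L} (hx : IsIntegral F x) :
    ∃ n : ℕ, ∀ v : Fin (n + 1) → L, (∀ j, ∃ p : Polynomial F, Polynomial.aeval x p = v j) →
      ∃ c : Fin (n + 1) → F, (∃ j, c j ≠ 0) ∧ ∑ j, c j • v j = 0 := by
  haveI := IntermediateField.adjoin.finiteDimensional hx
  refine ⟨Module.finrank F F⟮x⟯, fun v hv => ?_⟩
  have hmem : ∀ j, v j ∈ F⟮x⟯ := by
    intro j
    obtain ⟨p, hp⟩ := hv j
    rw [← hp]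
    apply IntermediateField.algebra_adjoin_le_adjoin F {x}
    rw [Algebra.adjoin_singleton_eq_range_aeval]
    exact ⟨p, rfl⟩
  set u : Fin (Module.finrank F F⟮x⟯ + 1) → F⟮x⟯ := fun j => ⟨v j, hmem j⟩ with hu
  have hnli : ¬ LinearIndependent F u := by
    intro hli
    have := hli.fintype_card_le_finrank
    simp at this
  obtain ⟨c, hcsum, j₀, hj₀⟩ := Fintype.not_linearIndependent_iff.mp hnli
  refine ⟨c, ⟨j₀, hj₀⟩, ?_⟩
  have := congrArg (Subtype.val) hcsum
  push_cast at this
  simpa using this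


set_option maxHeartbeats 1000000 in
/-- If `g' = h·g` for some algebraic power series `h`, then `g` is D-finite.
(In particular, if `C'` is algebraic then `exp C` is D-finite.) -/
theorem dfinite_of_deriv_eq_algebraic_mul (g h : PowerSeries ℚ)
    (hh : IsAlgebraicPS h) (hg : derivative ℚ g = h * g) :
    IsDFinitePS g := by
  classical
  obtain ⟨P₀, hP₀ne, hP₀⟩ := hh
  have hex : ∃ n, ∃ P : Polynomial (Polynomial ℚ),
      P ≠ 0 ∧ Polynomial.eval₂ ρQ h P = 0 ∧ P.natDegree = n :=
    ⟨P₀.natDegree, P₀, hP₀ne, hP₀, rfl⟩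
  obtain ⟨P, hPne, hP0, hPdeg⟩ := Nat.find_spec hex
  -- the derivative of the minimal polynomial does not vanish at h
  have hdeg1 : P.natDegree ≠ 0 := by
    intro h0
    apply hPne
    have hC := Polynomial.eq_C_of_natDegree_eq_zero h0
    rw [hC, Polynomial.eval₂_C] at hP0
    have : P.coeff 0 = 0 := by
      rwa [Polynomial.coeToPowerSeries.ringHom_apply, Polynomial.coe_eq_zero_iff] at hP0
    rw [hC, this, map_zero]
  have hq0 : Polynomial.derivative P ≠ 0 := fun hz =>
    hdeg1 (Polynomial.natDegree_eq_zero_of_derivative_eq_zero hz)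
  have hqdeg : (Polynomial.derivative P).natDegree < Nat.find hex := by
    rw [← hPdeg]
    exact Polynomial.natDegree_derivative_lt hdeg1
  have hEne : Polynomial.eval₂ ρQ h (Polynomial.derivative P) ≠ 0 := fun hz =>
    Nat.find_min hex hqdeg ⟨Polynomial.derivative P, hq0, hz, rfl⟩
  -- move to Laurent series
  have hinj : Function.Injective (algebraMap (PowerSeries ℚ) (LaurentSeries ℚ)) :=
    IsFractionRing.injective (PowerSeries ℚ) (LaurentSeries ℚ)
  set x : LaurentSeries ℚ := algebraMap (PowerSeries ℚ) (LaurentSeries ℚ) h with hx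
  have hx_int : IsIntegral (RatFunc ℚ) x := by
    refine (IsAlgebraic.isIntegral ⟨P.map (algebraMap (Polynomial ℚ) (RatFunc ℚ)), ?_, ?_⟩)
    · exact Polynomial.map_ne_zero_iff
        (IsFractionRing.injective (Polynomial ℚ) (RatFunc ℚ)) |>.mpr hPne
    · rw [← aux_eval_mem, hP0, map_zero]
  obtain ⟨n, hrel⟩ := aux_lin hx_int
  set MM : Fin (n + 1) → Polynomial (Polynomial ℚ) := fun j =>
    NN P j * (Polynomial.derivative P) ^ (2 * (n - (j : ℕ))) with hMM
  set v : Fin (n + 1) → LaurentSeries ℚ := fun j =>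
    algebraMap (PowerSeries ℚ) (LaurentSeries ℚ) (Polynomial.eval₂ ρQ h (MM j)) with hv
  obtain ⟨c, ⟨j₀, hj₀⟩, hcsum⟩ := hrel v (fun j =>
    ⟨(MM j).map (algebraMap (Polynomial ℚ) (RatFunc ℚ)), (aux_eval_mem h (MM j)).symm⟩)
  obtain ⟨b, hb⟩ := IsLocalization.exist_integer_multiples
    (nonZeroDivisors (Polynomial ℚ)) Finset.univ c
  choose e he using fun i : Fin (n + 1) => hb i (Finset.mem_univ i)
  have heb : ∀ i, algebraMap (Polynomial ℚ) (RatFunc ℚ) (e i) = (b : Polynomial ℚ) • c i := he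
  have he0 : e j₀ ≠ 0 := by
    intro hz
    apply hj₀
    have hbne : algebraMap (Polynomial ℚ) (RatFunc ℚ) (b : Polynomial ℚ) ≠ 0 := by
      have hb0 : (b : Polynomial ℚ) ≠ 0 := nonZeroDivisors.coe_ne_zero b
      intro hc
      exact hb0 (IsFractionRing.injective (Polynomial ℚ) (RatFunc ℚ) (by simpa using hc))
    have h1 := heb j₀
    rw [hz, map_zero, Algebra.smul_def] at h1
    exact (mul_eq_zero.mp h1.symm).resolve_left hbne
  -- the linear relation descends to power series
  have hsum0 : ∑ j : Fin (n + 1), ρQ (e j) * Polynomial.eval₂ ρQ h (MM j) = 0 := by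
    apply hinj
    rw [map_sum, map_zero]
    have hterm : ∀ j : Fin (n + 1),
        algebraMap (PowerSeries ℚ) (LaurentSeries ℚ) (ρQ (e j) * Polynomial.eval₂ ρQ h (MM j))
        = algebraMap (RatFunc ℚ) (LaurentSeries ℚ)
            (algebraMap (Polynomial ℚ) (RatFunc ℚ) (b : Polynomial ℚ)) * (c j • v j) := by
      intro j
      rw [map_mul, aux_coe_comm, heb j, Algebra.smul_def (b : Polynomial ℚ) (c j), map_mul,
        Algebra.smul_def]
      ring
    rw [Finset.sum_congr rfl fun j _ => hterm j, ← Finset.mul_sum, hcsum, mul_zero]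
  -- conclude
  refine ⟨n, e, ⟨j₀, he0⟩, ?_⟩
  have hkey : (∑ j : Fin (n + 1), (e j : PowerSeries ℚ) * ((fun g => derivative ℚ g)^[(j : ℕ)] g))
      * (Polynomial.eval₂ ρQ h (Polynomial.derivative P)) ^ (2 * n) = 0 := by
    rw [Finset.sum_mul]
    have hterm : ∀ j : Fin (n + 1),
        ((e j : PowerSeries ℚ) * ((fun g => derivative ℚ g)^[(j : ℕ)] g))
          * (Polynomial.eval₂ ρQ h (Polynomial.derivative P)) ^ (2 * n)
        = ρQ (e j) * Polynomial.eval₂ ρQ h (MM j) * g := by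
      intro j
      have hjle : (j : ℕ) ≤ n := Nat.lt_succ_iff.mp j.isLt
      have hsplit : 2 * n = 2 * (j : ℕ) + 2 * (n - (j : ℕ)) := by omega
      rw [hsplit, pow_add, hMM]
      have hkr := key_rel h g P hg hP0 (j : ℕ)
      rw [Polynomial.eval₂_mul, Polynomial.eval₂_pow]
      rw [Polynomial.coeToPowerSeries.ringHom_apply]
      calc (e j : PowerSeries ℚ) * ((fun g => derivative ℚ g)^[(j : ℕ)] g)
            * ((Polynomial.eval₂ ρQ h (Polynomial.derivative P)) ^ (2 * (j : ℕ))
              * (Polynomial.eval₂ ρQ h (Polynomial.derivative P)) ^ (2 * (n - (j : ℕ))))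
          = (e j : PowerSeries ℚ) * (((fun g => derivative ℚ g)^[(j : ℕ)] g)
              * (Polynomial.eval₂ ρQ h (Polynomial.derivative P)) ^ (2 * (j : ℕ)))
              * (Polynomial.eval₂ ρQ h (Polynomial.derivative P)) ^ (2 * (n - (j : ℕ))) := by ring
        _ = (e j : PowerSeries ℚ) * (Polynomial.eval₂ ρQ h (NN P (j : ℕ)) * g)
              * (Polynomial.eval₂ ρQ h (Polynomial.derivative P)) ^ (2 * (n - (j : ℕ))) := by
            rw [hkr]
        _ = (e j : PowerSeries ℚ) * (Polynomial.eval₂ ρQ h (NN P (j : ℕ))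
              * (Polynomial.eval₂ ρQ h (Polynomial.derivative P)) ^ (2 * (n - (j : ℕ)))) * g := by
            ring
    rw [Finset.sum_congr rfl fun j _ => hterm j, ← Finset.sum_mul, hsum0, zero_mul]
  rcases mul_eq_zero.mp hkey with hz | hz
  · exact hz
  · exact absurd hz (pow_ne_zero _ hEne)
end

section
/- The product of two D-finite formal power series is D-finite. -/
open PowerSeries

noncomputable section DFProof
open Finset Pointwise

local notation "Dps" => (fun g => derivative ℚ g)

lemma Dps_term (p : Polynomial ℚ) (a : ℕ) (f : PowerSeries ℚ) :
    derivative ℚ ((p : PowerSeries ℚ) * Dps^[a] f) =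
      ((Polynomial.derivative p : Polynomial ℚ) : PowerSeries ℚ) * Dps^[a] f
        + (p : PowerSeries ℚ) * Dps^[a + 1] f := by
  rw [Derivation.leibniz, Function.iterate_succ_apply']
  simp [smul_eq_mul, PowerSeries.derivative_coe]
  ring

lemma ann_shift (f : PowerSeries ℚ) (m : ℕ) (c : ℕ → Polynomial ℚ)
    (hc0 : ∀ a, m < a → c a = 0)
    (hsum : ∑ a ∈ range (m + 1), ((c a : PowerSeries ℚ) * Dps^[a] f) = 0) (t : ℕ) :
    ∃ e : ℕ → Polynomial ℚ, e (m + t) = c m ∧ (∀ a, m + t < a → e a = 0) ∧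
      ∑ a ∈ range (m + t + 1), ((e a : PowerSeries ℚ) * Dps^[a] f) = 0 := by
  induction t with
  | zero => exact ⟨c, rfl, fun a ha => hc0 a ha, hsum⟩
  | succ t ih =>
    obtain ⟨e, htop, hhi, hs⟩ := ih
    set n := m + t with hn
    have hmt : m + (t + 1) = n + 1 := by omega
    rw [hmt]
    set e' : ℕ → Polynomial ℚ :=
      fun a => Polynomial.derivative (e a) + (if a = 0 then 0 else e (a - 1)) with he'
    refine ⟨e', ?_, ?_, ?_⟩
    · have h1 : e (n + 1) = 0 := hhi (n + 1) (by omega)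
      simp [he', h1, htop]
    · intro a ha
      have h1 : e a = 0 := hhi a (by omega)
      have h2 : e (a - 1) = 0 := hhi (a - 1) (by omega)
      simp [he', h1, h2]
    · have h0 : derivative ℚ (∑ a ∈ range (n + 1), ((e a : PowerSeries ℚ) * Dps^[a] f)) = 0 := by
        rw [hs]; simp
      rw [map_sum] at h0
      have h1 : ∑ a ∈ range (n + 1),
          (((Polynomial.derivative (e a) : Polynomial ℚ) : PowerSeries ℚ) * Dps^[a] f
            + (e a : PowerSeries ℚ) * Dps^[a + 1] f) = 0 := by
        rw [← h0]
        exact Finset.sum_congr rfl fun a _ => (Dps_term (e a) a f).symm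
      rw [Finset.sum_add_distrib] at h1
      have key : ∑ a ∈ range (n + 1 + 1), ((e' a : PowerSeries ℚ) * Dps^[a] f)
          = ∑ a ∈ range (n + 1), (((Polynomial.derivative (e a) : Polynomial ℚ) : PowerSeries ℚ) * Dps^[a] f)
            + ∑ a ∈ range (n + 1), ((e a : PowerSeries ℚ) * Dps^[a + 1] f) := by
        have expand : ∀ a, ((e' a : PowerSeries ℚ) * Dps^[a] f)
            = ((Polynomial.derivative (e a) : Polynomial ℚ) : PowerSeries ℚ) * Dps^[a] f
              + ((if a = 0 then 0 else e (a - 1) : Polynomial ℚ) : PowerSeries ℚ) * Dps^[a] f := by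
          intro a
          rw [he']
          push_cast
          ring
        simp_rw [expand]
        rw [Finset.sum_add_distrib]
        congr 1
        · rw [Finset.sum_range_succ]
          have h2 : e (n + 1) = 0 := hhi (n + 1) (by omega)
          simp [h2]
        · rw [Finset.sum_range_succ']
          simp only [Nat.succ_ne_zero, if_false, Nat.add_sub_cancel, reduceIte,
            Polynomial.coe_zero, zero_mul, add_zero]
      rw [key, h1]

lemma Dps_mul (p q : PowerSeries ℚ) :
    derivative ℚ (p * q) = derivative ℚ p * q + p * derivative ℚ q := by
  rw [Derivation.leibniz]
  simp [smul_eq_mul]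
  ring

lemma Dps_iterate_mul (p q : PowerSeries ℚ) (n : ℕ) :
    Dps^[n] (p * q) =
      ∑ k ∈ range (n + 1), n.choose k • (Dps^[n - k] p * Dps^[k] q) := by
  induction n with
  | zero => simp
  | succ n IH =>
    calc
      Dps^[n + 1] (p * q) = derivative ℚ (∑ k ∈ range (n + 1),
          n.choose k • (Dps^[n - k] p * Dps^[k] q)) := by
        rw [Function.iterate_succ_apply', IH]
      _ = (∑ k ∈ range (n + 1), n.choose k • (Dps^[n - k + 1] p * Dps^[k] q)) +
          ∑ k ∈ range (n + 1), n.choose k • (Dps^[n - k] p * Dps^[k + 1] q) := by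
        rw [map_sum, ← Finset.sum_add_distrib]
        refine Finset.sum_congr rfl fun k _ => ?_
        rw [map_nsmul, Dps_mul, Function.iterate_succ_apply', Function.iterate_succ_apply',
          smul_add]
      _ = ((∑ k ∈ range n, n.choose (k + 1) • (Dps^[n - k] p * Dps^[k + 1] q)) +
            1 • (Dps^[n + 1] p * Dps^[0] q)) +
          ∑ k ∈ range (n + 1), n.choose k • (Dps^[n - k] p * Dps^[k + 1] q) := by
        congr 1
        rw [Finset.sum_range_succ']
        congr 1
        · refine Finset.sum_congr rfl fun k hk => ?_
          have h1 : n - (k + 1) + 1 = n - k := by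
            have := Finset.mem_range.mp hk; omega
          rw [h1]
        · simp
      _ = ∑ k ∈ range (n + 1 + 1), (n + 1).choose k • (Dps^[n + 1 - k] p * Dps^[k] q) := by
        rw [Finset.sum_range_succ' _ (n + 1)]
        have hF : ∀ k ∈ range (n + 1), (n + 1).choose (k + 1) •
              (Dps^[n + 1 - (k + 1)] p * Dps^[k + 1] q)
            = n.choose k • (Dps^[n - k] p * Dps^[k + 1] q)
              + n.choose (k + 1) • (Dps^[n - k] p * Dps^[k + 1] q) := by
          intro k _
          rw [Nat.succ_sub_succ, Nat.choose_succ_succ, add_smul]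
        rw [Finset.sum_congr rfl hF, Finset.sum_add_distrib, Finset.sum_range_succ
          (fun k => n.choose (k + 1) • (Dps^[n - k] p * Dps^[k + 1] q))]
        simp only [Nat.choose_succ_self, zero_smul, add_zero, Nat.choose_zero_right, one_smul,
          Nat.sub_zero, Function.iterate_zero, id_eq]
        abel

abbrev Kd : Type := FractionRing (PowerSeries ℚ)
abbrev Fd : Type := FractionRing (Polynomial ℚ)

def phiD : Polynomial ℚ →+* Kd :=
  (algebraMap (PowerSeries ℚ) Kd).comp (Polynomial.coeToPowerSeries.ringHom)

lemma phiD_apply (p : Polynomial ℚ) :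
    phiD p = algebraMap (PowerSeries ℚ) Kd (p : PowerSeries ℚ) := rfl

lemma phiD_inj : Function.Injective phiD :=
  (IsFractionRing.injective (PowerSeries ℚ) Kd).comp (Polynomial.coe_injective ℚ)

instance : Algebra Fd Kd := (IsFractionRing.lift phiD_inj).toAlgebra

lemma algebraMap_FdKd (p : Polynomial ℚ) :
    algebraMap Fd Kd (algebraMap (Polynomial ℚ) Fd p) = phiD p := by
  have : algebraMap Fd Kd = IsFractionRing.lift phiD_inj := rfl
  rw [this, IsFractionRing.lift_algebraMap]

/-- the F-span of the first m derivatives of f, inside K -/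
def derivSpan (f : PowerSeries ℚ) (m : ℕ) : Submodule Fd Kd :=
  Submodule.span Fd (Set.range fun a : Fin m => algebraMap (PowerSeries ℚ) Kd (Dps^[(a : ℕ)] f))

lemma deriv_mem_span (f : PowerSeries ℚ) (m : ℕ) (c : ℕ → Polynomial ℚ)
    (hcm : c m ≠ 0) (hc0 : ∀ a, m < a → c a = 0)
    (hsum : ∑ a ∈ range (m + 1), ((c a : PowerSeries ℚ) * Dps^[a] f) = 0) :
    ∀ t, algebraMap (PowerSeries ℚ) Kd (Dps^[t] f) ∈ derivSpan f m := by
  intro t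
  induction t using Nat.strong_induction_on with
  | _ t ih =>
    by_cases ht : t < m
    · exact Submodule.subset_span ⟨⟨t, ht⟩, rfl⟩
    · push_neg at ht
      obtain ⟨e, htop, hhi, hs⟩ := ann_shift f m c hc0 hsum (t - m)
      rw [show m + (t - m) = t by omega] at htop hhi hs
      -- push the relation to Kd
      have hK : ∑ a ∈ range (t + 1),
          phiD (e a) * algebraMap (PowerSeries ℚ) Kd (Dps^[a] f) = 0 := by
        have := congrArg (algebraMap (PowerSeries ℚ) Kd) hs
        rw [map_sum, map_zero] at this
        simpa [phiD_apply, map_mul] using this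
      rw [Finset.sum_range_succ, htop] at hK
      have hcm' : phiD (c m) ≠ 0 := fun h => hcm (phiD_inj (by simpa using h))
      -- solve for the top derivative
      have hsolve : algebraMap (PowerSeries ℚ) Kd (Dps^[t] f)
          = - ∑ a ∈ range t,
              (algebraMap (Polynomial ℚ) Fd (e a) / algebraMap (Polynomial ℚ) Fd (c m))
                • algebraMap (PowerSeries ℚ) Kd (Dps^[a] f) := by
        apply mul_left_cancel₀ hcm'
        rw [mul_neg, Finset.mul_sum]
        have hterm : ∀ a ∈ range t, phiD (c m) *
            ((algebraMap (Polynomial ℚ) Fd (e a) / algebraMap (Polynomial ℚ) Fd (c m))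
              • algebraMap (PowerSeries ℚ) Kd (Dps^[a] f))
            = phiD (e a) * algebraMap (PowerSeries ℚ) Kd (Dps^[a] f) := by
          intro a _
          rw [Algebra.smul_def, map_div₀, algebraMap_FdKd, algebraMap_FdKd]
          field_simp
        rw [Finset.sum_congr rfl hterm]
        linear_combination hK
      rw [hsolve]
      exact Submodule.neg_mem _ (Submodule.sum_mem _ fun a ha =>
        Submodule.smul_mem _ _ (ih a (Finset.mem_range.mp ha)))


lemma exists_ann (f : PowerSeries ℚ) (hf : IsDFinitePS f) :
    ∃ (m : ℕ) (c : ℕ → Polynomial ℚ), c m ≠ 0 ∧ (∀ a, m < a → c a = 0) ∧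
      ∑ a ∈ range (m + 1), ((c a : PowerSeries ℚ) * Dps^[a] f) = 0 := by
  classical
  obtain ⟨k, c, ⟨i₀, hi₀⟩, hsum⟩ := hf
  set c' : ℕ → Polynomial ℚ := fun a => if h : a < k + 1 then c ⟨a, h⟩ else 0 with hc'
  have hc'val : ∀ i : Fin (k + 1), c' (i : ℕ) = c i := by
    intro i; rw [hc']; exact dif_pos i.isLt
  set s : Finset ℕ := (range (k + 1)).filter (fun a => c' a ≠ 0) with hs
  have hi₀s : (i₀ : ℕ) ∈ s := by
    simp only [hs, mem_filter, mem_range]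
    exact ⟨i₀.isLt, by rw [hc'val]; exact hi₀⟩
  have hne : s.Nonempty := ⟨_, hi₀s⟩
  set m := s.max' hne with hm
  have hms : m ∈ s := s.max'_mem hne
  have hmlt : m < k + 1 := (mem_filter.mp hms).1 |> mem_range.mp
  have hcm : c' m ≠ 0 := (mem_filter.mp hms).2
  have hc0 : ∀ a, m < a → c' a = 0 := by
    intro a ha
    by_contra h0
    have : a < k + 1 := by
      by_contra h1; exact h0 (by rw [hc']; exact dif_neg h1)
    have : a ∈ s := by simp [hs, mem_filter, mem_range, this, h0]
    exact absurd (s.le_max' a this) (by omega)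
  refine ⟨m, c', hcm, hc0, ?_⟩
  have h1 : ∑ a ∈ range (k + 1), ((c' a : PowerSeries ℚ) * Dps^[a] f) = 0 := by
    rw [← Fin.sum_univ_eq_sum_range (fun a => ((c' a : PowerSeries ℚ) * Dps^[a] f)) (k + 1)]
    rw [← hsum]
    exact Finset.sum_congr rfl fun i _ => by rw [hc'val]
  calc ∑ a ∈ range (m + 1), ((c' a : PowerSeries ℚ) * Dps^[a] f)
      = ∑ a ∈ range (m + 1), ((c' a : PowerSeries ℚ) * Dps^[a] f)
        + ∑ x ∈ range (k - m), ((c' (m + 1 + x) : PowerSeries ℚ) * Dps^[m + 1 + x] f) := by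
        have hz : ∀ x ∈ range (k - m),
            ((c' (m + 1 + x) : PowerSeries ℚ) * Dps^[m + 1 + x] f) = 0 := by
          intro x _
          rw [hc0 (m + 1 + x) (by omega)]
          simp
        rw [Finset.sum_congr rfl hz]
        simp
    _ = ∑ a ∈ range (m + 1 + (k - m)), ((c' a : PowerSeries ℚ) * Dps^[a] f) :=
        (Finset.sum_range_add _ _ _).symm
    _ = 0 := by rw [show m + 1 + (k - m) = k + 1 by omega]; exact h1

/-- The product of two D-finite formal power series is D-finite. -/
theorem dfinite_mul (f g : PowerSeries ℚ) (hf : IsDFinitePS f) (hg : IsDFinitePS g) :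
    IsDFinitePS (f * g) := by
  classical
  obtain ⟨m, cf, hcfm, hcf0, hcfs⟩ := exists_ann f hf
  obtain ⟨n, cg, hcgn, hcg0, hcgs⟩ := exists_ann g hg
  have hVf := deriv_mem_span f m cf hcfm hcf0 hcfs
  have hVg := deriv_mem_span g n cg hcgn hcg0 hcgs
  set ι := algebraMap (PowerSeries ℚ) Kd with hι
  set W : Submodule Fd Kd := derivSpan f m * derivSpan g n with hWdef
  have hW : ∀ t, ι (Dps^[t] (f * g)) ∈ W := by
    intro t
    rw [Dps_iterate_mul, map_sum]
    refine Submodule.sum_mem _ fun k _ => ?_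
    rw [map_nsmul, map_mul]
    exact nsmul_mem (Submodule.mul_mem_mul (hVf _) (hVg _)) _
  have hfin : FiniteDimensional Fd W := by
    have : W = Submodule.span Fd
        ((Set.range fun a : Fin m => ι (Dps^[(a : ℕ)] f)) *
          (Set.range fun b : Fin n => ι (Dps^[(b : ℕ)] g))) := by
      rw [hWdef, derivSpan, derivSpan, Submodule.span_mul_span]
    rw [this]
    exact FiniteDimensional.span_of_finite Fd ((Set.finite_range _).mul (Set.finite_range _))
  set d := Module.finrank Fd W with hd
  set v : Fin (d + 1) → W := fun i => ⟨ι (Dps^[(i : ℕ)] (f * g)), hW i⟩ with hv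
  have hdep : ¬ LinearIndependent Fd v := by
    intro h
    have := h.fintype_card_le_finrank
    rw [Fintype.card_fin] at this
    omega
  rw [Fintype.not_linearIndependent_iff] at hdep
  obtain ⟨h, hrel, i₀, hi₀⟩ := hdep
  have hrelK : ∑ i : Fin (d + 1), h i • ι (Dps^[(i : ℕ)] (f * g)) = 0 := by
    have := congrArg (fun x : W => (x : Kd)) hrel
    simpa [hv] using this
  obtain ⟨b, hb⟩ := IsLocalization.exist_integer_multiples
    (nonZeroDivisors (Polynomial ℚ)) Finset.univ h
  have h2 : ∀ i : Fin (d + 1), ∃ p : Polynomial ℚ,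
      algebraMap (Polynomial ℚ) Fd p = (b : Polynomial ℚ) • h i := fun i => hb i (mem_univ i)
  choose cc hcc using h2
  have hbne : (b : Polynomial ℚ) ≠ 0 := nonZeroDivisors.ne_zero b.prop
  have hbF : algebraMap (Polynomial ℚ) Fd (b : Polynomial ℚ) ≠ 0 := by
    intro hcontr
    exact hbne (IsFractionRing.injective (Polynomial ℚ) Fd (by rw [hcontr, map_zero]))
  refine ⟨d, cc, ⟨i₀, ?_⟩, ?_⟩
  · intro h0
    apply hi₀
    have := hcc i₀
    rw [h0, map_zero] at this
    have h3 : algebraMap (Polynomial ℚ) Fd (b : Polynomial ℚ) * h i₀ = 0 := by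
      rw [Algebra.smul_def] at this
      exact this.symm
    rcases mul_eq_zero.mp h3 with h4 | h4
    · exact absurd h4 hbF
    · exact h4
  · apply IsFractionRing.injective (PowerSeries ℚ) Kd
    rw [map_sum, map_zero]
    have hterm : ∀ i : Fin (d + 1),
        ι ((cc i : PowerSeries ℚ) * Dps^[(i : ℕ)] (f * g))
          = algebraMap Fd Kd (algebraMap (Polynomial ℚ) Fd (b : Polynomial ℚ))
              * (h i • ι (Dps^[(i : ℕ)] (f * g))) := by
      intro i
      rw [map_mul, ← phiD_apply, ← algebraMap_FdKd, hcc i, Algebra.smul_def (h i),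
        Algebra.smul_def ((b : Polynomial ℚ)), map_mul]
      ring
    rw [Finset.sum_congr rfl (fun i _ => hterm i), ← Finset.mul_sum, hrelK, mul_zero]
end DFProof
end

section
/- Every algebraic formal power series is D-finite. -/
open PowerSeries

/-!
Let `P(f) = 0` with `P` of minimal degree in `Y`; in characteristic zero `g := P_Y(f) ≠ 0`.
Differentiating `P(f) = 0` gives `g f' ∈ ℚ[x][f]`, hence every derivative `f⁽ⁿ⁾` lands in
`ℚ[x][f]` after multiplication by a power of `g`. So all `f⁽ⁿ⁾` lie in the field `ℚ(x)(f)`,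
which is finite-dimensional over `ℚ(x)`, and a linear dependence among `f, f', …, f⁽ᵐ⁾` over
`ℚ(x)` is one over `ℚ[x]` after clearing denominators.
-/

open Polynomial Differential

theorem IsAlgebraic.exists_aeval_eq_zero_aeval_derivative_ne_zero {A B : Type*} [CommRing A]
    [IsAddTorsionFree A] [CommRing B] [Algebra A B] [FaithfulSMul A B] {x : B}
    (hx : IsAlgebraic A x) : ∃ P : A[X], aeval x P = 0 ∧ aeval x (derivative P) ≠ 0 := by
  obtain ⟨P, hP0, hP⟩ := hx
  induction hd : P.natDegree using Nat.strong_induction_on generalizing P with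
  | _ d ih =>
  by_cases hP' : aeval x (derivative P) = 0
  · have hd0 : P.natDegree ≠ 0 := by
      intro h
      rw [eq_C_of_natDegree_eq_zero h, aeval_C,
        map_eq_zero_iff _ (FaithfulSMul.algebraMap_injective A B)] at hP
      exact hP0 (eq_C_of_natDegree_eq_zero h ▸ by simp [hP])
    exact ih _ (hd ▸ natDegree_derivative_lt hd0) _ (derivative_ne_zero.mpr hd0) hP' rfl
  · exact ⟨P, hP, hP'⟩

theorem mul_deriv_pow_mul {B : Type*} [CommRing B] [Differential B] (g h : B) (k : ℕ) :
    g * (g ^ k * h)′ = g ^ (k + 1) * h′ + k * (g ^ k * h) * g′ := by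
  rw [Derivation.leibniz, Derivation.leibniz_pow]
  rcases k with _ | k
  · simp
  · simp only [smul_eq_mul, nsmul_eq_mul, add_tsub_cancel_right]
    push_cast
    ring

section DifferentialAlgebra

variable {A B : Type*} [CommRing A] [CommRing B] [Algebra A B]
  [Differential A] [Differential B] [DifferentialAlgebra A B] {x : B} {P : A[X]}

theorem aeval_derivative_mul_deriv_mem_adjoin (hP : aeval x P = 0) {y : B}
    (hy : y ∈ Algebra.adjoin A {x}) : aeval x (derivative P) * y′ ∈ Algebra.adjoin A {x} := by
  have hx : aeval x (derivative P) * x′ = -aeval x (mapCoeffs P) := by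
    linear_combination (deriv_aeval_eq x P).symm.trans (by rw [hP, map_zero])
  rw [Algebra.adjoin_singleton_eq_range_aeval, AlgHom.mem_range] at hy
  obtain ⟨q, rfl⟩ := hy
  have hderiv : aeval x (derivative P) * (aeval x q)′ = aeval x (derivative P) *
      aeval x (mapCoeffs q) - aeval x (derivative q) * aeval x (mapCoeffs P) := by
    rw [deriv_aeval_eq]
    linear_combination aeval x (derivative q) * hx
  rw [hderiv]
  exact sub_mem (mul_mem (aeval_mem_adjoin_singleton _ _) (aeval_mem_adjoin_singleton _ _))
    (mul_mem (aeval_mem_adjoin_singleton _ _) (aeval_mem_adjoin_singleton _ _))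

theorem pow_add_two_mul_deriv_mem_adjoin (hP : aeval x P = 0) {k : ℕ} {h : B}
    (hh : aeval x (derivative P) ^ k * h ∈ Algebra.adjoin A {x}) :
    aeval x (derivative P) ^ (k + 2) * h′ ∈ Algebra.adjoin A {x} := by
  set g := aeval x (derivative P)
  have hg : g ∈ Algebra.adjoin A {x} := aeval_mem_adjoin_singleton _ _
  have identity : g ^ (k + 2) * h′ = g * (g * (g ^ k * h)′) - k * (g ^ k * h) * (g * g′) := by
    rw [mul_deriv_pow_mul]
    ring
  rw [identity]
  exact sub_mem (mul_mem hg (aeval_derivative_mul_deriv_mem_adjoin hP hh))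
    (mul_mem (mul_mem (natCast_mem _ _) hh) (aeval_derivative_mul_deriv_mem_adjoin hP hg))

theorem exists_pow_mul_iterate_deriv_mem_adjoin (hP : aeval x P = 0) (n : ℕ) :
    ∃ k, aeval x (derivative P) ^ k * Differential.deriv^[n] x ∈ Algebra.adjoin A {x} := by
  induction n with
  | zero => exact ⟨0, by simp [Algebra.self_mem_adjoin_singleton]⟩
  | succ n ih =>
    obtain ⟨k, hk⟩ := ih
    exact ⟨k + 2, by
      simpa only [Function.iterate_succ_apply'] using pow_add_two_mul_deriv_mem_adjoin hP hk⟩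

end DifferentialAlgebra

theorem exists_not_linearIndependent_of_pow_mul_mem_adjoin {A B : Type*} [CommRing A]
    [CommRing B] [IsDomain B] [Algebra A B] [FaithfulSMul A B] {x : B} (hx : IsAlgebraic A x)
    {g : B} (hg0 : g ≠ 0) (hg : g ∈ Algebra.adjoin A {x}) {u : ℕ → B}
    (hu : ∀ n, ∃ k, g ^ k * u n ∈ Algebra.adjoin A {x}) :
    ∃ m, ¬ LinearIndependent A (fun i : Fin (m + 1) ↦ u i) := by
  have := IsDomain.of_faithfulSMul A B
  let K := FractionRing A
  let L := FractionRing B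
  let _ : Algebra K L := FractionRing.liftAlgebra A L
  let ι := IsScalarTower.toAlgHom A B L
  have hι : Function.Injective ι := IsFractionRing.injective B L
  have hxK : IsIntegral K (ι x) :=
    (hx.algebraMap.extendScalars (IsFractionRing.injective A K)).isIntegral
  let W := IntermediateField.adjoin K {ι x}
  have : FiniteDimensional K W := IntermediateField.adjoin.finiteDimensional hxK
  have hW : ∀ y ∈ Algebra.adjoin A {x}, ι y ∈ W := by
    intro y hy
    rw [Algebra.adjoin_singleton_eq_range_aeval, AlgHom.mem_range] at hy
    obtain ⟨q, rfl⟩ := hy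
    rw [← Polynomial.aeval_algHom_apply, ← aeval_map_algebraMap K]
    exact IntermediateField.algebra_adjoin_le_adjoin K _ (aeval_mem_adjoin_singleton K _)
  have huW : ∀ n, ι (u n) ∈ W := by
    intro n
    obtain ⟨k, hk⟩ := hu n
    have hιg : ι g ≠ 0 := (map_ne_zero_iff _ hι).mpr hg0
    have hun : ι (u n) = (ι g)⁻¹ ^ k * ι (g ^ k * u n) := by
      rw [map_mul, map_pow, inv_pow, inv_mul_cancel_left₀ (pow_ne_zero _ hιg)]
    rw [hun]
    exact mul_mem (pow_mem (inv_mem (hW g hg)) _) (hW _ hk)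
  refine ⟨Module.finrank K W, fun hli ↦ ?_⟩
  have hliL : LinearIndependent K (fun i : Fin (Module.finrank K W + 1) ↦ ι (u i)) :=
    (LinearIndependent.iff_fractionRing A K).mp
      (hli.map' ι.toLinearMap (LinearMap.ker_eq_bot.mpr hι))
  have hliW : LinearIndependent K
      (fun i : Fin (Module.finrank K W + 1) ↦ (⟨ι (u i), huW i⟩ : W)) :=
    LinearIndependent.of_comp W.val.toLinearMap hliL
  simpa using hliW.fintype_card_le_finrank

theorem IsAlgebraic.exists_not_linearIndependent_iterate_deriv {A B : Type*} [CommRing A]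
    [CharZero A] [CommRing B] [IsDomain B] [Algebra A B] [FaithfulSMul A B]
    [Differential A] [Differential B] [DifferentialAlgebra A B] {x : B} (hx : IsAlgebraic A x) :
    ∃ m, ¬ LinearIndependent A (fun i : Fin (m + 1) ↦ Differential.deriv^[i] x) := by
  have := IsDomain.of_faithfulSMul A B
  obtain ⟨P, hP, hP'⟩ := hx.exists_aeval_eq_zero_aeval_derivative_ne_zero
  exact exists_not_linearIndependent_of_pow_mul_mem_adjoin hx hP'
    (aeval_mem_adjoin_singleton _ _) (exists_pow_mul_iterate_deriv_mem_adjoin hP)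

-- Generic in `B`, so the `ℤ`-algebra is the one `Differential` expects: on `R⟦X⟧`, instance
-- search finds `MvPowerSeries.instAlgebra` instead, which is not reducibly equal to it.
abbrev Differential.ofDerivation {R B : Type*} [CommRing R] [CommRing B] [Algebra R B]
    (d : Derivation R B B) : Differential B :=
  ⟨d.restrictScalars ℤ⟩

section

variable (R : Type*) [CommRing R]

noncomputable instance : Differential R[X] := .ofDerivation derivative'

noncomputable instance : Differential R⟦X⟧ := .ofDerivation (d⁄dX R)

instance : DifferentialAlgebra R[X] R⟦X⟧ := ⟨derivative_coe⟩

instance : FaithfulSMul R[X] R⟦X⟧ :=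
  (faithfulSMul_iff_algebraMap_injective _ _).mpr (Polynomial.coe_injective R)

end

/-- Every algebraic formal power series is D-finite. -/
theorem dfinite_of_algebraic (f : PowerSeries ℚ) (hf : IsAlgebraicPS f) :
    IsDFinitePS f := by
  obtain ⟨m, hm⟩ := IsAlgebraic.exists_not_linearIndependent_iterate_deriv (A := ℚ[X]) hf
  obtain ⟨c, hc, i, hi⟩ := Fintype.not_linearIndependent_iff.mp hm
  exact ⟨m, c, ⟨i, hi⟩, hc⟩
end
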